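/- arXiv:1312.7069 — 4 statements merged into one kernel-verified Lean document; each statement's English description precedes it below -/
import Mathlib

section
/- Let 1 < α ≤ 2, β = 1 - α/2, and ξ ∈ [0, π]. Then the function g(β) = β·cos((1-β)ξ) - (1-β)·cos(βξ) is nondecreasing in β on [0, 1/2] and satisfies g(β) ≤ 0 for all β ∈ [0, 1/2]. -/
open Real

/-!
`g'(β) = cos((1-β)ξ) + cos(βξ) + ξ (β sin((1-β)ξ) + (1-β) sin(βξ))`. For `ξ ∈ [0, π]` and
`β ∈ [0, 1]` the sines are nonnegative and the sum of cosines is `2 cos(ξ/2) cos((1-2β)ξ/2) ≥ 0`,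
so `g` is nondecreasing on all of `[0, 1]`; nonpositivity on `[0, 1/2]` then follows from
`g(1/2) = 0`.
-/

namespace QuasiCompact

noncomputable def g (ξ β : ℝ) : ℝ :=
  β * cos ((1 - β) * ξ) - (1 - β) * cos (β * ξ)

theorem g_half (ξ : ℝ) : g ξ (1 / 2) = 0 := by
  norm_num [g]

theorem hasDerivAt_g (ξ β : ℝ) :
    HasDerivAt (g ξ)
      (cos ((1 - β) * ξ) + cos (β * ξ) + ξ * (β * sin ((1 - β) * ξ) + (1 - β) * sin (β * ξ)))
      β := by
  have hlin : HasDerivAt (fun b : ℝ => (1 - b) * ξ) (-ξ) β := by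
    simpa using ((hasDerivAt_const β 1).sub (hasDerivAt_id β)).mul_const ξ
  have hleft : HasDerivAt (fun b : ℝ => b * cos ((1 - b) * ξ))
      (1 * cos ((1 - β) * ξ) + β * (-sin ((1 - β) * ξ) * -ξ)) β :=
    (hasDerivAt_id' β).mul hlin.cos
  have hright : HasDerivAt (fun b : ℝ => (1 - b) * cos (b * ξ))
      ((0 - 1) * cos (β * ξ) + (1 - β) * (-sin (β * ξ) * (1 * ξ))) β :=
    ((hasDerivAt_const β 1).sub (hasDerivAt_id' β)).mul ((hasDerivAt_id' β).mul_const ξ).cos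
  exact (hleft.sub hright).congr_deriv (by ring)

variable {ξ β : ℝ}

theorem cos_one_sub_mul_add_cos_mul_nonneg (hξ : ξ ∈ Set.Icc 0 π) (hβ : β ∈ Set.Icc 0 1) :
    0 ≤ cos ((1 - β) * ξ) + cos (β * ξ) := by
  obtain ⟨hξ₀, hξπ⟩ := hξ
  obtain ⟨hβ₀, hβ₁⟩ := hβ
  have hsum : ((1 - β) * ξ + β * ξ) / 2 = ξ / 2 := by ring
  have hdiff : ((1 - β) * ξ - β * ξ) / 2 = (1 - 2 * β) * ξ / 2 := by ring
  rw [cos_add_cos, hsum, hdiff]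
  have hhalf : 0 ≤ cos (ξ / 2) := cos_nonneg_of_mem_Icc ⟨by linarith, by linarith⟩
  have hskew : 0 ≤ cos ((1 - 2 * β) * ξ / 2) :=
    cos_nonneg_of_mem_Icc ⟨by nlinarith, by nlinarith⟩
  positivity

theorem deriv_g_nonneg (hξ : ξ ∈ Set.Icc 0 π) (hβ : β ∈ Set.Icc 0 1) :
    0 ≤ deriv (g ξ) β := by
  rw [(hasDerivAt_g ξ β).deriv]
  have hcos := cos_one_sub_mul_add_cos_mul_nonneg hξ hβ
  obtain ⟨hξ₀, hξπ⟩ := hξ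
  obtain ⟨hβ₀, hβ₁⟩ := hβ
  have hsin₁ : 0 ≤ sin ((1 - β) * ξ) :=
    sin_nonneg_of_nonneg_of_le_pi (mul_nonneg (by linarith) hξ₀) (by nlinarith)
  have hsin₂ : 0 ≤ sin (β * ξ) :=
    sin_nonneg_of_nonneg_of_le_pi (mul_nonneg hβ₀ hξ₀) (by nlinarith)
  have hsub : 0 ≤ 1 - β := by linarith
  positivity

theorem monotoneOn_g (hξ : ξ ∈ Set.Icc 0 π) : MonotoneOn (g ξ) (Set.Icc 0 1) := by
  have hdiff : Differentiable ℝ (g ξ) := fun b => (hasDerivAt_g ξ b).differentiableAt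
  exact monotoneOn_of_deriv_nonneg (convex_Icc 0 1) hdiff.continuous.continuousOn
    hdiff.differentiableOn fun _ hb => deriv_g_nonneg hξ (interior_subset hb)

end QuasiCompact

theorem g_monotone_nonpos (ξ : ℝ) (hξ : ξ ∈ Set.Icc 0 Real.pi) :
    MonotoneOn (fun β : ℝ => β * Real.cos ((1 - β) * ξ) - (1 - β) * Real.cos (β * ξ))
        (Set.Icc 0 (1 / 2)) ∧
      ∀ β ∈ Set.Icc (0 : ℝ) (1 / 2),
        β * Real.cos ((1 - β) * ξ) - (1 - β) * Real.cos (β * ξ) ≤ 0 := by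
  have hmono : MonotoneOn (QuasiCompact.g ξ) (Set.Icc 0 (1 / 2)) :=
    (QuasiCompact.monotoneOn_g hξ).mono (Set.Icc_subset_Icc_right (by norm_num))
  refine ⟨hmono, fun β hβ => ?_⟩
  calc QuasiCompact.g ξ β ≤ QuasiCompact.g ξ (1 / 2) := hmono hβ (by norm_num) hβ.2
    _ = 0 := QuasiCompact.g_half ξ
end

section
/- For β ∈ [0, 1/2) and ξ ∈ [0, π], the quantity (6β - 1)·cos((1-β)ξ) - (13 - 6β)·cos(βξ) is strictly negative. -/
/-!
Write `a = cos ((1 - β) ξ)` and `b = cos (β ξ)`. Since `0 ≤ β ξ ≤ (1 - β) ξ ≤ π`, monotonicity of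
`cos` on `[0, π]` gives `a ≤ b`, and `β ξ < π / 2` gives `b > 0`. The expression equals
`(6β - 1)(a - b) - (14 - 12β) b`. For `β ≥ 1/6` both terms are `≤ 0`, the second strictly.
For `β < 1/6` we have `β ξ < π / 3`, so `b > 1/2`, and with `a ≥ -1` the expression is at most
`(1 - 6β) - (13 - 6β) b < 0`.
-/

open Real

lemma cos_one_sub_mul_le_cos_mul {β ξ : ℝ} (hβ0 : 0 ≤ β) (hβ : β ≤ 1 / 2) (hξ0 : 0 ≤ ξ)
    (hξ : ξ ≤ π) : cos ((1 - β) * ξ) ≤ cos (β * ξ) :=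
  cos_le_cos_of_nonneg_of_le_pi (mul_nonneg hβ0 hξ0) (by nlinarith) (by nlinarith)

lemma one_half_lt_cos_of_abs_lt {x : ℝ} (hx : |x| < π / 3) : 1 / 2 < cos x := by
  rw [← cos_abs, ← cos_pi_div_three]
  exact cos_lt_cos_of_nonneg_of_le_pi (abs_nonneg x) (by linarith [pi_pos]) hx

theorem third_order_generating_neg (β ξ : ℝ) (hβ : β ∈ Set.Ico (0 : ℝ) (1 / 2))
    (hξ : ξ ∈ Set.Icc 0 Real.pi) :
    (6 * β - 1) * Real.cos ((1 - β) * ξ) - (13 - 6 * β) * Real.cos (β * ξ) < 0 := by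
  obtain ⟨hβ0, hβ2⟩ := hβ
  obtain ⟨hξ0, hξπ⟩ := hξ
  have hβξ0 : 0 ≤ β * ξ := mul_nonneg hβ0 hξ0
  have hab : cos ((1 - β) * ξ) ≤ cos (β * ξ) :=
    cos_one_sub_mul_le_cos_mul hβ0 hβ2.le hξ0 hξπ
  rcases le_or_gt (1 / 6 : ℝ) β with hβ6 | hβ6
  · have hb : 0 < cos (β * ξ) :=
      cos_pos_of_mem_Ioo ⟨by linarith [pi_pos], by nlinarith [pi_pos]⟩
    nlinarith [mul_le_mul_of_nonneg_left hab (by linarith : (0 : ℝ) ≤ 6 * β - 1)]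
  · have hb : 1 / 2 < cos (β * ξ) :=
      one_half_lt_cos_of_abs_lt (by rw [abs_of_nonneg hβξ0]; nlinarith [pi_pos])
    nlinarith [neg_one_le_cos ((1 - β) * ξ)]
end

section
/- For β ∈ [0, 1/2) and ξ ∈ [0, π/2], the quantity -(β/2)cos((2-β)ξ) - (1 - β/2)cos(βξ) is strictly negative. -/
/-! Since `βξ ≤ π/4`, the term `cos (βξ)` is at least `1/2`, so `(1 - β/2) cos (βξ) > 3/8`,
while `-(β/2) cos ((2 - β)ξ) ≤ β/2 < 1/4`. -/

open Real

theorem one_half_le_cos_of_abs_le {x : ℝ} (hx : |x| ≤ π / 3) : 1 / 2 ≤ cos x := by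
  rw [← cos_abs, ← cos_pi_div_three]
  exact cos_le_cos_of_nonneg_of_le_pi (abs_nonneg x) (by linarith [pi_pos]) hx

theorem second_order_generating_neg_first_half (β ξ : ℝ)
    (hβ : β ∈ Set.Ico (0 : ℝ) (1 / 2)) (hξ : ξ ∈ Set.Icc 0 (Real.pi / 2)) :
    -(β / 2) * Real.cos ((2 - β) * ξ) - (1 - β / 2) * Real.cos (β * ξ) < 0 := by
  obtain ⟨hβ0, hβ1⟩ := hβ
  obtain ⟨hξ0, hξ1⟩ := hξ
  have hβξ : |β * ξ| ≤ π / 3 := by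
    rw [abs_of_nonneg (mul_nonneg hβ0 hξ0)]
    nlinarith [pi_pos]
  have hcos_βξ := one_half_le_cos_of_abs_le hβξ
  have hfirst : -(β / 2) * cos ((2 - β) * ξ) ≤ β / 2 := by
    nlinarith [neg_one_le_cos ((2 - β) * ξ)]
  have hsecond : (1 - β / 2) / 2 ≤ (1 - β / 2) * cos (β * ξ) := by
    nlinarith
  linarith
end

section
/- For β ∈ [0, 1/2) and ξ ∈ [π/2, π], the quantity -(β/2)cos((2-β)ξ) - (1 - β/2)cos(βξ) is nonpositive. -/
/-! With `θ = (1/2 - β) ξ` and `x = ξ / 2` one has `(2 - β) ξ = 3x + θ` and `β ξ = x - θ`; the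
triple-angle formulas then turn the negated expression into
`cos θ cos x (1 - 2β sin² x) + sin θ sin x (1 - 2β cos² x)`, a sum of products of nonnegative
factors because `θ, x ∈ [0, π/2]` and `2β ≤ 1`. -/

open Real

theorem half_mul_cos_three_mul_add_add_cos_sub (β x θ : ℝ) :
    β / 2 * cos (3 * x + θ) + (1 - β / 2) * cos (x - θ) =
      cos θ * cos x * (1 - 2 * β * sin x ^ 2) + sin θ * sin x * (1 - 2 * β * cos x ^ 2) := by
  rw [cos_add, cos_sub, cos_three_mul, sin_three_mul]
  linear_combination (2 * β * cos θ * cos x + 2 * β * sin θ * sin x) * sin_sq_add_cos_sq x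

theorem half_mul_cos_two_sub_mul_add_cos_mul_nonneg {β ξ : ℝ} (hβ : β ∈ Set.Icc (0 : ℝ) (1 / 2))
    (hξ : ξ ∈ Set.Icc 0 π) :
    0 ≤ β / 2 * cos ((2 - β) * ξ) + (1 - β / 2) * cos (β * ξ) := by
  obtain ⟨hβ0, hβ2⟩ := hβ
  obtain ⟨hξ0, hξπ⟩ := hξ
  set θ := (1 / 2 - β) * ξ
  have hθ0 : 0 ≤ θ := mul_nonneg (by linarith) hξ0
  have hθπ : θ ≤ π / 2 := by
    show (1 / 2 - β) * ξ ≤ π / 2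
    linarith [mul_nonneg hβ0 hξ0]
  have hcos_θ : 0 ≤ cos θ := cos_nonneg_of_mem_Icc ⟨by linarith [pi_pos], hθπ⟩
  have hsin_θ : 0 ≤ sin θ := sin_nonneg_of_nonneg_of_le_pi hθ0 (by linarith [pi_pos])
  have hcos_x : 0 ≤ cos (ξ / 2) := cos_nonneg_of_mem_Icc ⟨by linarith [pi_pos], by linarith⟩
  have hsin_x : 0 ≤ sin (ξ / 2) := sin_nonneg_of_nonneg_of_le_pi (by linarith) (by linarith)
  have hsin_sq : 0 ≤ 1 - 2 * β * sin (ξ / 2) ^ 2 := by nlinarith [sin_sq_le_one (ξ / 2)]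
  have hcos_sq : 0 ≤ 1 - 2 * β * cos (ξ / 2) ^ 2 := by nlinarith [cos_sq_le_one (ξ / 2)]
  rw [show (2 - β) * ξ = 3 * (ξ / 2) + θ by ring, show β * ξ = ξ / 2 - θ by ring,
    half_mul_cos_three_mul_add_add_cos_sub]
  positivity

theorem second_order_generating_nonpos_second_half (β ξ : ℝ)
    (hβ : β ∈ Set.Ico (0 : ℝ) (1 / 2)) (hξ : ξ ∈ Set.Icc (Real.pi / 2) Real.pi) :
    -(β / 2) * Real.cos ((2 - β) * ξ) - (1 - β / 2) * Real.cos (β * ξ) ≤ 0 := by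
  have hξ₀ : ξ ∈ Set.Icc 0 π := ⟨by linarith [hξ.1, pi_pos], hξ.2⟩
  linarith [half_mul_cos_two_sub_mul_add_cos_mul_nonneg (Set.Ico_subset_Icc_self hβ) hξ₀]
end
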